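/- arXiv:1103.0868 — 2 statements merged into one kernel-verified Lean document; each statement's English description precedes it below -/
import Mathlib

section
/- For every n ≥ 1, the number wm(n, 2) of isomorphism classes of weighted games on n voters with exactly two types of voters satisfies 15·wm(n, 2) ≤ n^5 + 60·n^4 (i.e., wm(n, 2) ≤ n^5/15 + 4·n^4). -/
def SimpleGame (n : ℕ) (χ : Finset (Fin n) → Prop) : Prop :=
  (∀ U V : Finset (Fin n), U ⊆ V → χ U → χ V) ∧ ¬ χ (∅ : Finset (Fin n)) ∧ χ Finset.univ

def IsRep {n : ℕ} (χ : Finset (Fin n) → Prop) (q : ℕ) (w : Fin n → ℕ) : Prop :=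
  ∀ U : Finset (Fin n), χ U ↔ q ≤ ∑ i ∈ U, w i

def IsWeighted {n : ℕ} (χ : Finset (Fin n) → Prop) : Prop :=
  ∃ q w, IsRep χ q w

def MinRep {n : ℕ} (χ : Finset (Fin n) → Prop) (q : ℕ) (w : Fin n → ℕ) : Prop :=
  IsRep χ q w ∧ ∀ q' w', IsRep χ q' w' → ∀ i, w i ≤ w' i

def Desir {n : ℕ} (χ : Finset (Fin n) → Prop) (i j : Fin n) : Prop :=
  ∀ U : Finset (Fin n), j ∈ U → i ∉ U → χ U → χ (insert i (U.erase j))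

def VEquiv {n : ℕ} (χ : Finset (Fin n) → Prop) (i j : Fin n) : Prop :=
  Desir χ i j ∧ Desir χ j i

def StrictDesir {n : ℕ} (χ : Finset (Fin n) → Prop) (i j : Fin n) : Prop :=
  Desir χ i j ∧ ¬ Desir χ j i

def NullVoter {n : ℕ} (χ : Finset (Fin n) → Prop) (i : Fin n) : Prop :=
  ∀ U : Finset (Fin n), χ (insert i U) ↔ χ U

def ShiftMinWin {n : ℕ} (χ : Finset (Fin n) → Prop) (U : Finset (Fin n)) : Prop :=
  χ U ∧ (∀ i ∈ U, ¬ χ (U.erase i)) ∧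
    ∀ i ∈ U, ∀ j, j ∉ U → StrictDesir χ i j → ¬ χ (insert j (U.erase i))

def ShiftMaxLose {n : ℕ} (χ : Finset (Fin n) → Prop) (U : Finset (Fin n)) : Prop :=
  ¬ χ U ∧ (∀ j, j ∉ U → χ (insert j U)) ∧
    ∀ j ∈ U, ∀ i, i ∉ U → StrictDesir χ i j → χ (insert i (U.erase j))

def TwoTypes {n : ℕ} (χ : Finset (Fin n) → Prop) (N1 N2 : Finset (Fin n)) : Prop :=
  N1.Nonempty ∧ N2.Nonempty ∧ Disjoint N1 N2 ∧ N1 ∪ N2 = Finset.univ ∧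
  (∀ i ∈ N1, ∀ j ∈ N1, VEquiv χ i j) ∧
  (∀ i ∈ N2, ∀ j ∈ N2, VEquiv χ i j) ∧
  (∀ i ∈ N1, ∀ j ∈ N2, StrictDesir χ i j)

noncomputable def NumWinTypes2 {n : ℕ} (χ : Finset (Fin n) → Prop) (N1 N2 : Finset (Fin n)) : ℕ :=
  Set.ncard {p : ℕ × ℕ | ∃ U, ShiftMinWin χ U ∧ p = ((U ∩ N1).card, (U ∩ N2).card)}

def LPFeasible {n : ℕ} (χ : Finset (Fin n) → Prop) (N1 N2 : Finset (Fin n))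
    (w1 w2 q : ℝ) : Prop :=
  0 ≤ w1 ∧ 0 ≤ w2 ∧ 0 ≤ q ∧
  (∀ U, ShiftMinWin χ U → q ≤ ((U ∩ N1).card : ℝ) * w1 + ((U ∩ N2).card : ℝ) * w2) ∧
  (∀ U, ShiftMaxLose χ U → ((U ∩ N1).card : ℝ) * w1 + ((U ∩ N2).card : ℝ) * w2 ≤ q - 1)

def GameIso (n : ℕ) (χ χ' : Finset (Fin n) → Prop) : Prop :=
  ∃ σ : Equiv.Perm (Fin n), ∀ U : Finset (Fin n), χ' U ↔ χ (U.image σ)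

noncomputable def NumTypes (n : ℕ) (χ : Finset (Fin n) → Prop) : ℕ :=
  Set.ncard {S : Set (Fin n) | ∃ i, S = {j | VEquiv χ i j}}

noncomputable def ClassCount (n : ℕ) (χ : Finset (Fin n) → Prop) (U : Finset (Fin n)) (i : Fin n) : ℕ :=
  Set.ncard {j : Fin n | j ∈ U ∧ VEquiv χ i j}

def SameType (n : ℕ) (χ : Finset (Fin n) → Prop) (U V : Finset (Fin n)) : Prop :=
  ∀ i, ClassCount n χ U i = ClassCount n χ V i

noncomputable def NumSMWTypes (n : ℕ) (χ : Finset (Fin n) → Prop) : ℕ :=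
  Set.ncard {T : Set (Finset (Fin n)) | ∃ U, ShiftMinWin χ U ∧
    T = {V | ShiftMinWin χ V ∧ SameType n χ U V}}

noncomputable def wmntr (n t r : ℕ) : ℕ :=
  Set.ncard {C : Set (Finset (Fin n) → Prop) | ∃ χ, SimpleGame n χ ∧ IsWeighted χ ∧
    NumTypes n χ = t ∧ NumSMWTypes n χ = r ∧ C = {χ' | GameIso n χ χ'}}

noncomputable def wmnt (n t : ℕ) : ℕ :=
  Set.ncard {C : Set (Finset (Fin n) → Prop) | ∃ χ, SimpleGame n χ ∧ IsWeighted χ ∧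
    NumTypes n χ = t ∧ C = {χ' | GameIso n χ χ'}}

def PreservesTypes {n : ℕ} (χ : Finset (Fin n) → Prop) (w : Fin n → ℕ) : Prop :=
  ∀ i j, VEquiv χ i j → w i = w j

def MinRepPT {n : ℕ} (χ : Finset (Fin n) → Prop) (q : ℕ) (w : Fin n → ℕ) : Prop :=
  IsRep χ q w ∧ PreservesTypes χ w ∧
    ∀ q' w', IsRep χ q' w' → PreservesTypes χ w' → ∀ i, w i ≤ w' i

def Repre (a b k : ℕ) : Prop := ∃ u v : ℕ, u * a + v * b = k

def Wvec (t a b : ℕ) (l : Fin t → ℕ) (k : Fin t) : Fin (t + b + a) → ℕ :=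
  fun i => if h : (i : ℕ) < t then
      (a * b - l ⟨(i : ℕ), h⟩ - 1) + (if (i : ℕ) = (k : ℕ) then 0 else 1)
    else if (i : ℕ) < t + b then a else b

/-!
Voters of one type can be exchanged inside a coalition without changing its status, so a game
with the two types `N` and `Nᶜ` only sees the profile `(#(U ∩ N), #(U \ N))` of a coalition `U`.
Replacing the weights of a representation by their class averages shows that the winning
profiles are the points `g` of the grid `[0, #N] × [0, n - #N]` with `Q ≤ g.1 * a + g.2 * b`.
Rotating this line about its lowest winning grid point until it meets a second grid point (or
becomes horizontal) shows that such a cut is determined by two grid points and a bit. Hence every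
weighted game with two types is isomorphic to one given by a code `(k, p, r, bit)`, and there are
`∑_{0 < k < n} 2 ((k + 1) (n - k + 1))^2` codes, a sum evaluated in closed form.
-/

open Finset

section Voters

variable {α : Type*} [DecidableEq α]

def profile (N U : Finset α) : ℕ × ℕ := (#(U ∩ N), #(U \ N))

theorem profile_map_perm (σ : Equiv.Perm α) (N U : Finset α) :
    profile (N.map σ.toEmbedding) (U.image σ) = profile N U := by
  simp only [profile, map_eq_image, Equiv.coe_toEmbedding, ← image_inter _ _ σ.injective,
    ← image_sdiff _ _ σ.injective, card_image_of_injective _ σ.injective]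

variable {n : ℕ} {χ : Finset (Fin n) → Prop}

theorem VEquiv.refl (χ : Finset (Fin n) → Prop) (i : Fin n) : VEquiv χ i i :=
  ⟨fun _ hj hi _ => absurd hj hi, fun _ hj hi _ => absurd hj hi⟩

theorem VEquiv.iff_insert_erase {i j : Fin n} (h : VEquiv χ i j) {U : Finset (Fin n)}
    (hi : i ∉ U) (hj : j ∈ U) : χ U ↔ χ (insert i (U.erase j)) := by
  have hij : i ≠ j := by rintro rfl; exact hi hj
  refine ⟨h.1 U hj hi, fun hU => ?_⟩
  have := h.2 _ (mem_insert_self _ _) (by simp [hij.symm]) hU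
  rwa [erase_insert (by simp [hi]), insert_erase hj] at this

theorem iff_of_sdiff_eq_of_card_inter_eq {N : Finset (Fin n)}
    (hN : ∀ i ∈ N, ∀ j ∈ N, VEquiv χ i j) {U V : Finset (Fin n)} (hUV : U \ N = V \ N)
    (hc : #(U ∩ N) = #(V ∩ N)) : χ U ↔ χ V := by
  induction h : #(U \ V) generalizing U with
  | zero =>
    have hsub : U ⊆ V := sdiff_eq_empty_iff_subset.mp (card_eq_zero.mp h)
    have : U ∩ N = V ∩ N := eq_of_subset_of_card_le (inter_subset_inter_right hsub) hc.ge
    rw [← sdiff_union_inter U N, ← sdiff_union_inter V N, hUV, this]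
  | succ m ih =>
    obtain ⟨j, hj⟩ : (U \ V).Nonempty := card_pos.mp (by omega)
    have hjN : j ∈ N := by
      by_contra hjN
      have : j ∈ V \ N := hUV ▸ mem_sdiff.mpr ⟨(mem_sdiff.mp hj).1, hjN⟩
      exact (mem_sdiff.mp hj).2 (mem_sdiff.mp this).1
    obtain ⟨i, hi⟩ : ((V ∩ N) \ (U ∩ N)).Nonempty := by
      rw [← card_pos, ← card_sdiff_comm hc, card_pos]
      exact ⟨j, by simp_all⟩
    simp only [mem_sdiff, mem_inter, not_and] at hi hj
    have hiU : i ∉ U := fun h => hi.2 h hi.1.2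
    rw [(hN i hi.1.2 j hjN).iff_insert_erase hiU hj.1]
    refine ih ?_ ?_ ?_
    · rw [← hUV]
      ext
      grind
    · rw [← hc, show insert i (U.erase j) ∩ N = insert i ((U ∩ N).erase j) by ext; grind,
        card_insert_of_notMem (by simp [hiU]), card_erase_of_mem (by simp [hj.1, hjN])]
      have : 0 < #(U ∩ N) := card_pos.mpr ⟨j, by simp [hj.1, hjN]⟩
      omega
    · rw [show insert i (U.erase j) \ V = (U \ V).erase j by ext; grind,
        card_erase_of_mem (by simp [hj.1, hj.2]), h, Nat.add_sub_cancel]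

theorem iff_of_profile_eq {N : Finset (Fin n)} (hN : ∀ i ∈ N, ∀ j ∈ N, VEquiv χ i j)
    (hNc : ∀ i ∈ Nᶜ, ∀ j ∈ Nᶜ, VEquiv χ i j) {U V : Finset (Fin n)}
    (h : profile N U = profile N V) : χ U ↔ χ V := by
  obtain ⟨h1, h2⟩ := Prod.ext_iff.mp h
  simp only [profile] at h1 h2
  set M := V ∩ N ∪ U \ N
  have hMN : M ∩ N = V ∩ N := by ext; grind
  have hMN' : M \ N = U \ N := by ext; grind
  refine (iff_of_sdiff_eq_of_card_inter_eq hN hMN'.symm (by rw [hMN, h1])).trans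
    (iff_of_sdiff_eq_of_card_inter_eq hNc ?_ ?_)
  · ext; simp only [M, mem_sdiff, mem_compl, mem_union, mem_inter, not_not]; tauto
  · rw [← sdiff_eq_inter_compl, ← sdiff_eq_inter_compl, hMN', h2]

theorem exists_compl_classes (h2 : NumTypes n χ = 2) :
    ∃ N : Finset (Fin n), N.Nonempty ∧ Nᶜ.Nonempty ∧
      (∀ i ∈ N, ∀ j ∈ N, VEquiv χ i j) ∧ (∀ i ∈ Nᶜ, ∀ j ∈ Nᶜ, VEquiv χ i j) := by
  classical
  obtain ⟨A, B, hAB, hclasses⟩ := Set.ncard_eq_two.mp h2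
  have hcls : ∀ i, {j | VEquiv χ i j} = A ∨ {j | VEquiv χ i j} = B := fun i => by
    have : {j | VEquiv χ i j} ∈ ({A, B} : Set (Set (Fin n))) := hclasses ▸ ⟨i, rfl⟩
    simpa using this
  have hsame : ∀ i j, {k | VEquiv χ i k} = {k | VEquiv χ j k} → VEquiv χ i j := fun i j h =>
    (h ▸ VEquiv.refl χ j : j ∈ {k | VEquiv χ i k})
  obtain ⟨a, ha⟩ : A ∈ {S : Set (Fin n) | ∃ i, S = {j | VEquiv χ i j}} := by simp [hclasses]
  obtain ⟨b, hb⟩ : B ∈ {S : Set (Fin n) | ∃ i, S = {j | VEquiv χ i j}} := by simp [hclasses]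
  refine ⟨univ.filter fun i => {j | VEquiv χ i j} = A, ⟨a, by simp [ha]⟩,
    ⟨b, by simp [← hb, hAB.symm]⟩, fun i hi j hj => hsame i j ?_, fun i hi j hj => hsame i j ?_⟩
  · simp only [mem_filter, mem_univ, true_and] at hi hj
    rw [hi, hj]
  · simp only [mem_compl, mem_filter, mem_univ, true_and] at hi hj
    rw [(hcls i).resolve_left hi, (hcls j).resolve_left hj]

end Voters

theorem Finset.exists_subset_card_eq_card_nsmul_sum_le {ι M : Type*} [DecidableEq ι]
    [AddCommMonoid M] [LinearOrder M] [IsOrderedAddMonoid M] (w : ι → M) (N : Finset ι) :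
    ∀ x ≤ #N, ∃ S ⊆ N, #S = x ∧ #N • ∑ i ∈ S, w i ≤ x • ∑ i ∈ N, w i := by
  induction N using Finset.induction_on_max_value w with
  | empty => intro x hx; exact ⟨∅, subset_rfl, by simp_all, by simp⟩
  | insert a N ha hmax ih =>
    intro x hx
    rw [card_insert_of_notMem ha] at hx ⊢
    rcases hx.eq_or_lt with rfl | hx
    · exact ⟨insert a N, subset_rfl, card_insert_of_notMem ha, le_rfl⟩
    obtain ⟨S, hSN, hS, hsum⟩ := ih x (Nat.lt_succ_iff.mp hx)
    refine ⟨S, hSN.trans (subset_insert _ _), hS, ?_⟩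
    have hSa : ∑ i ∈ S, w i ≤ x • w a := hS ▸ sum_le_card_nsmul _ _ _ fun i hi => hmax i (hSN hi)
    calc (#N + 1) • ∑ i ∈ S, w i = #N • ∑ i ∈ S, w i + ∑ i ∈ S, w i := succ_nsmul _ _
      _ ≤ x • ∑ i ∈ N, w i + x • w a := add_le_add hsum hSa
      _ = x • ∑ i ∈ insert a N, w i := by rw [sum_insert ha, nsmul_add, add_comm (x • w a)]

theorem Finset.exists_subset_card_eq_nsmul_sum_le_card_nsmul {ι M : Type*} [DecidableEq ι]
    [AddCommMonoid M] [LinearOrder M] [IsOrderedAddMonoid M] (w : ι → M) (N : Finset ι) :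
    ∀ x ≤ #N, ∃ S ⊆ N, #S = x ∧ x • ∑ i ∈ N, w i ≤ #N • ∑ i ∈ S, w i :=
  exists_subset_card_eq_card_nsmul_sum_le (M := Mᵒᵈ) w N

theorem IsRep.exists_profile_threshold {n : ℕ} {χ : Finset (Fin n) → Prop} {N : Finset (Fin n)}
    {q : ℕ} {w : Fin n → ℕ} (hrep : IsRep χ q w)
    (hN : ∀ i ∈ N, ∀ j ∈ N, VEquiv χ i j) (hNc : ∀ i ∈ Nᶜ, ∀ j ∈ Nᶜ, VEquiv χ i j)
    (hne : N.Nonempty) (hnec : Nᶜ.Nonempty) :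
    ∃ a b Q : ℕ, ∀ U, χ U ↔ Q ≤ (profile N U).1 * a + (profile N U).2 * b := by
  refine ⟨#Nᶜ * ∑ i ∈ N, w i, #N * ∑ i ∈ Nᶜ, w i, q * (#N * #Nᶜ), fun U => ?_⟩
  simp only [profile]
  have hx : #(U ∩ N) ≤ #N := card_le_card inter_subset_right
  have hy : #(U \ N) ≤ #Nᶜ := card_le_card fun i hi => mem_compl.mpr (mem_sdiff.mp hi).2
  have hST : ∀ S ⊆ N, ∀ T ⊆ Nᶜ, #S = #(U ∩ N) → #T = #(U \ N) →
      (χ U ↔ q ≤ ∑ i ∈ S, w i + ∑ i ∈ T, w i) := fun S hS T hT hSc hTc => by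
    rw [← sum_union (disjoint_of_subset_left hS (disjoint_of_subset_right hT
      disjoint_compl_right)), ← hrep]
    have h1 : (S ∪ T) ∩ N = S := by
      ext i; have := @hS i; have := @hT i; simp only [mem_inter, mem_union, mem_compl] at *; tauto
    have h2 : (S ∪ T) \ N = T := by
      ext i; have := @hS i; have := @hT i; simp only [mem_sdiff, mem_union, mem_compl] at *; tauto
    exact iff_of_profile_eq hN hNc (by rw [profile, profile, h1, h2, hSc, hTc])
  constructor
  · intro hU
    obtain ⟨S, hS, hSc, hSw⟩ := exists_subset_card_eq_card_nsmul_sum_le w N _ hx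
    obtain ⟨T, hT, hTc, hTw⟩ := exists_subset_card_eq_card_nsmul_sum_le w Nᶜ _ hy
    have := (hST S hS T hT hSc hTc).mp hU
    simp only [smul_eq_mul] at hSw hTw
    nlinarith [Nat.mul_le_mul_right (#N * #Nᶜ) this, Nat.mul_le_mul_left #Nᶜ hSw,
      Nat.mul_le_mul_left #N hTw]
  · intro hQ
    by_contra hU
    obtain ⟨S, hS, hSc, hSw⟩ := exists_subset_card_eq_nsmul_sum_le_card_nsmul w N _ hx
    obtain ⟨T, hT, hTc, hTw⟩ := exists_subset_card_eq_nsmul_sum_le_card_nsmul w Nᶜ _ hy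
    have := not_le.mp (mt (hST S hS T hT hSc hTc).mpr hU)
    simp only [smul_eq_mul] at hSw hTw
    have hpos : 0 < #N * #Nᶜ := Nat.mul_pos (card_pos.mpr hne) (card_pos.mpr hnec)
    nlinarith [Nat.mul_le_mul_right (#N * #Nᶜ) this, Nat.mul_le_mul_left #Nᶜ hSw,
      Nat.mul_le_mul_left #N hTw]

def linForm (α β : ℚ) (p g : ℕ × ℕ) : ℚ := α * ((g.1 : ℚ) - p.1) + β * ((g.2 : ℚ) - p.2)

def crossForm (p r : ℕ × ℕ) : ℕ × ℕ → ℚ := linForm ((r.2 : ℚ) - p.2) (-((r.1 : ℚ) - p.1)) p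

def dotForm (p r : ℕ × ℕ) : ℕ × ℕ → ℚ := linForm ((r.1 : ℚ) - p.1) ((r.2 : ℚ) - p.2) p

/-- The cut of `G` by the line through `p` and `r`; `b` decides whether the points of the line
beyond `p` in the direction of `r` are excluded (`true`) or not (`false`). The codes with `p = r`
stand for the horizontal and the vertical line through `p`. -/
def lineCut (G : Finset (ℕ × ℕ)) (p r : ℕ × ℕ) (b : Bool) : Finset (ℕ × ℕ) :=
  if p = r then G.filter (fun g => if b then p.2 ≤ g.2 else p.1 ≤ g.1)
  else if b then G.filter (fun g => 0 < crossForm p r g ∨ crossForm p r g = 0 ∧ dotForm p r g ≤ 0)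
  else G.filter (fun g => crossForm p r g ≤ 0)

@[simp] theorem linForm_self (α β : ℚ) (p : ℕ × ℕ) : linForm α β p p = 0 := by
  simp [linForm]

-- Decompose `g - p` along `r - p` and its normal.
theorem linForm_mul_dotForm (α β : ℚ) (p r g : ℕ × ℕ) :
    linForm α β p g * dotForm p r r =
      linForm α β p r * dotForm p r g + linForm (-β) α p r * crossForm p r g := by
  unfold crossForm dotForm linForm; ring

theorem dotForm_self_pos {p r : ℕ × ℕ} (h : p ≠ r) : 0 < dotForm p r r := by
  have : (r.1 : ℚ) - p.1 ≠ 0 ∨ (r.2 : ℚ) - p.2 ≠ 0 := by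
    by_contra! h'
    exact h (Prod.ext (by exact_mod_cast (sub_eq_zero.mp h'.1).symm)
      (by exact_mod_cast (sub_eq_zero.mp h'.2).symm))
  unfold dotForm linForm
  rcases this with h1 | h1
  · nlinarith [sq_pos_of_ne_zero h1, sq_nonneg ((r.2 : ℚ) - p.2)]
  · nlinarith [sq_pos_of_ne_zero h1, sq_nonneg ((r.1 : ℚ) - p.1)]

theorem exists_rotation {ι : Type*} (G : Finset ι) (X Y : ι → ℚ) {c : ℚ} (hc : 0 ≤ c) :
    ∃ T, 0 ≤ T ∧ (∀ g ∈ G, 0 ≤ X g → 0 ≤ X g + T * Y g) ∧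
      (∀ g ∈ G, X g < 0 → X g + T * Y g ≤ 0) ∧
      (T = c ∨ ∃ g ∈ G, X g + T * Y g = 0 ∧ (0 ≤ X g → Y g < 0)) := by
  classical
  -- `B` holds the points that change side as `T` grows; `T` is the first time, capped by `c`,
  -- at which one of them reaches `X + T * Y = 0`.
  set B := G.filter (fun g => 0 ≤ X g ∧ Y g < 0 ∨ X g < 0 ∧ 0 < Y g)
  set S := insert c (B.image (fun g => -X g / Y g))
  have hS : S.Nonempty := insert_nonempty _ _
  have hB : ∀ g ∈ B, S.min' hS ≤ -X g / Y g := fun g hg =>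
    min'_le _ _ (mem_insert_of_mem (mem_image_of_mem _ hg))
  have hT : 0 ≤ S.min' hS := by
    refine le_min' _ _ _ fun t ht => ?_
    rcases mem_insert.mp ht with rfl | ht
    · exact hc
    obtain ⟨g, hg, rfl⟩ := mem_image.mp ht
    rcases (mem_filter.mp hg).2 with ⟨h1, h2⟩ | ⟨h1, h2⟩
    · exact div_nonneg_of_nonpos (by linarith) h2.le
    · exact div_nonneg (by linarith) h2.le
  refine ⟨S.min' hS, hT, fun g hg hX => ?_, fun g hg hX => ?_, ?_⟩
  · rcases lt_or_ge (Y g) 0 with hY | hY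
    · have := hB g (mem_filter.mpr ⟨hg, .inl ⟨hX, hY⟩⟩)
      rw [le_div_iff_of_neg hY] at this
      linarith
    · nlinarith
  · rcases le_or_gt (Y g) 0 with hY | hY
    · nlinarith
    · have := hB g (mem_filter.mpr ⟨hg, .inr ⟨hX, hY⟩⟩)
      rw [le_div_iff₀ hY] at this
      linarith
  · rcases mem_insert.mp (S.min'_mem hS) with h | h
    · exact .inl h
    obtain ⟨g, hg, hT⟩ := mem_image.mp h
    obtain ⟨hgG, hXY⟩ := mem_filter.mp hg
    have hY : Y g ≠ 0 := by rcases hXY with ⟨-, h⟩ | ⟨-, h⟩ <;> [exact h.ne; exact h.ne']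
    refine .inr ⟨g, hgG, ?_, fun hX => ?_⟩
    · rw [← hT]; field_simp; ring
    · rcases hXY with ⟨-, h⟩ | ⟨h, -⟩
      · exact h
      · exact absurd hX (not_le.mpr h)

section lineCut

variable {G : Finset (ℕ × ℕ)} {p r : ℕ × ℕ}

theorem filter_eq_lineCut_true {α₀ β₀ α β : ℚ}
    (hwin : ∀ g ∈ G, 0 ≤ linForm α₀ β₀ p g → 0 ≤ linForm α β p g)
    (hlose : ∀ g ∈ G, linForm α₀ β₀ p g < 0 → linForm α β p g ≤ 0)
    (hr : linForm α β p r = 0) (hXr : linForm α₀ β₀ p r < 0) (hκ : 0 < linForm (-β) α p r) :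
    G.filter (fun g => 0 ≤ linForm α₀ β₀ p g) = lineCut G p r true := by
  have hpr : p ≠ r := by rintro rfl; simp at hXr
  have hD := dotForm_self_pos hpr
  rw [lineCut, if_neg hpr, if_pos rfl]
  refine filter_congr fun g hg => ?_
  -- `Z` is a positive multiple of `crossForm p r`, and on the line `X` is one of `-dotForm p r`.
  have hZ := linForm_mul_dotForm α β p r g
  have hX := linForm_mul_dotForm α₀ β₀ p r g
  rw [hr, zero_mul, zero_add] at hZ
  constructor
  · intro h
    have hZg := hwin g hg h
    rcases lt_trichotomy (crossForm p r g) 0 with hc | hc | hc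
    · nlinarith
    · rw [hc, mul_zero, add_zero] at hX
      exact .inr ⟨hc, by nlinarith⟩
    · exact .inl hc
  · rintro (hc | ⟨hc, hd⟩)
    · by_contra! h
      nlinarith [hlose g hg h]
    · rw [hc, mul_zero, add_zero] at hX
      nlinarith

theorem filter_eq_lineCut_false {α β : ℚ} (hr : linForm α β p r = 0)
    (hκ : linForm (-β) α p r < 0) :
    G.filter (fun g => 0 ≤ linForm α β p g) = lineCut G p r false := by
  have hpr : p ≠ r := by rintro rfl; simp at hκ
  have hD := dotForm_self_pos hpr
  rw [lineCut, if_neg hpr, if_neg Bool.false_ne_true]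
  refine filter_congr fun g _ => ?_
  have hZ := linForm_mul_dotForm α β p r g
  rw [hr, zero_mul, zero_add] at hZ
  constructor
  · intro h
    by_contra! hc
    nlinarith
  · intro hc
    nlinarith

theorem filter_linForm_zero_left {β : ℚ} (hβ : 0 < β) :
    G.filter (fun g => 0 ≤ linForm 0 β p g) = lineCut G p p true := by
  rw [lineCut, if_pos rfl]
  refine filter_congr fun g _ => ?_
  simp only [linForm, zero_mul, zero_add, if_true]
  rw [mul_nonneg_iff_of_pos_left hβ, sub_nonneg, Nat.cast_le]

theorem filter_linForm_zero_right {α : ℚ} (hα : 0 < α) :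
    G.filter (fun g => 0 ≤ linForm α 0 p g) = lineCut G p p false := by
  rw [lineCut, if_pos rfl]
  refine filter_congr fun g _ => ?_
  simp only [linForm, zero_mul, add_zero, Bool.false_eq_true, if_false]
  rw [mul_nonneg_iff_of_pos_left hα, sub_nonneg, Nat.cast_le]

end lineCut

theorem exists_lineCut_eq_filter_linForm {G : Finset (ℕ × ℕ)} {p : ℕ × ℕ} (hp : p ∈ G) {a b : ℚ}
    (ha : 0 ≤ a) (hb : 0 < b) :
    ∃ r ∈ G, ∃ bit, G.filter (fun g => 0 ≤ linForm a b p g) = lineCut G p r bit := by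
  -- Rotate the normal `(a, b)` towards `(0, b)` about `p`; at `T = a / b` the line is horizontal.
  set X := linForm a b p
  set Y := linForm (-b) a p
  obtain ⟨T, hT, hwin, hlose, hstop⟩ := exists_rotation G X Y (div_nonneg ha hb.le)
  have hZ : ∀ g, X g + T * Y g = linForm (a - T * b) (b + T * a) p g := fun g => by
    simp only [X, Y, linForm]; ring
  have hκ : ∀ g, linForm (-(b + T * a)) (a - T * b) p g = Y g - T * X g := fun g => by
    simp only [X, Y, linForm]; ring
  by_cases hline : ∃ r ∈ G, X r < 0 ∧ X r + T * Y r = 0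
  · obtain ⟨r, hr, hXr, hZr⟩ := hline
    have hYr : 0 < Y r := by
      by_contra! h
      nlinarith [mul_nonpos_of_nonneg_of_nonpos hT h]
    refine ⟨r, hr, true, filter_eq_lineCut_true (fun g hg h => ?_) (fun g hg h => ?_)
      (by rw [← hZ]; exact hZr) hXr ?_⟩
    · rw [← hZ]; exact hwin g hg h
    · rw [← hZ]; exact hlose g hg h
    · rw [hκ]; nlinarith [mul_nonneg hT (neg_nonneg.mpr hXr.le)]
  push Not at hline
  have hsep : ∀ g ∈ G, 0 ≤ X g ↔ 0 ≤ linForm (a - T * b) (b + T * a) p g := fun g hg => by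
    rw [← hZ]
    refine ⟨hwin g hg, fun h => ?_⟩
    by_contra! hX
    exact hline g hg hX (le_antisymm (hlose g hg hX) h)
  rw [filter_congr hsep]
  rcases hstop with rfl | ⟨r, hr, hZr, hY⟩
  · rw [show a - a / b * b = 0 by field_simp; ring]
    exact ⟨p, hp, true, filter_linForm_zero_left (by positivity)⟩
  · have hXr : 0 ≤ X r := by
      by_contra! h
      exact hline r hr h hZr
    refine ⟨r, hr, false, filter_eq_lineCut_false (by rw [← hZ]; exact hZr) ?_⟩
    rw [hκ]
    nlinarith [hY hXr]

theorem exists_lineCut_eq (G : Finset (ℕ × ℕ)) {a b Q : ℕ} (hab : 0 < a ∨ 0 < b)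
    (hW : ∃ g ∈ G, Q ≤ g.1 * a + g.2 * b) :
    ∃ p ∈ G, ∃ r ∈ G, ∃ bit, G.filter (fun g => Q ≤ g.1 * a + g.2 * b) = lineCut G p r bit := by
  obtain ⟨p, hp, hmin⟩ := exists_min_image (G.filter fun g => Q ≤ g.1 * a + g.2 * b)
    (fun g => g.1 * a + g.2 * b) (filter_nonempty_iff.mpr hW)
  have hpG := (mem_filter.mp hp).1
  have hpivot : G.filter (fun g => Q ≤ g.1 * a + g.2 * b) =
      G.filter (fun g => 0 ≤ linForm a b p g) := by
    refine filter_congr fun g hg => ?_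
    have : Q ≤ g.1 * a + g.2 * b ↔ p.1 * a + p.2 * b ≤ g.1 * a + g.2 * b :=
      ⟨fun h => hmin g (mem_filter.mpr ⟨hg, h⟩), (mem_filter.mp hp).2.trans⟩
    rw [this, ← Nat.cast_le (α := ℚ), linForm]
    push_cast
    constructor <;> intro h <;> linarith
  rw [hpivot]
  rcases Nat.eq_zero_or_pos b with rfl | hb
  · have ha : (0 : ℚ) < a := by exact_mod_cast hab.resolve_right (lt_irrefl 0)
    exact ⟨p, hpG, p, hpG, false, by simpa using filter_linForm_zero_right ha⟩
  · exact ⟨p, hpG, exists_lineCut_eq_filter_linForm hpG (Nat.cast_nonneg a) (by exact_mod_cast hb)⟩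

def grid (n₁ n₂ : ℕ) : Finset (ℕ × ℕ) := range (n₁ + 1) ×ˢ range (n₂ + 1)

theorem profile_mem_grid {n : ℕ} (N U : Finset (Fin n)) : profile N U ∈ grid #N (n - #N) := by
  have h1 : #(U ∩ N) ≤ #N := card_le_card inter_subset_right
  have h2 : #(U \ N) ≤ n - #N := by
    simpa [card_univ_sdiff] using card_le_card (sdiff_subset_sdiff (subset_univ U) (le_refl N))
  simp only [grid, profile, mem_product, mem_range]
  omega

theorem gameIso_equivalence (n : ℕ) : Equivalence (GameIso n) where
  refl _ := ⟨1, fun U => by simp⟩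
  symm := by
    rintro χ χ' ⟨σ, h⟩
    refine ⟨σ⁻¹, fun U => ?_⟩
    rw [h, image_image]
    simp [Function.comp_def]
  trans := by
    rintro χ χ' χ'' ⟨σ, h⟩ ⟨τ, h'⟩
    exact ⟨σ * τ, fun U => by rw [h', h, image_image, Equiv.Perm.coe_mul]⟩

theorem gameIso_of_profile {n : ℕ} {χ χ' : Finset (Fin n) → Prop} {N N' : Finset (Fin n)}
    (hc : #N' = #N) (P : ℕ × ℕ → Prop) (hχ : ∀ U, χ U ↔ P (profile N U))
    (hχ' : ∀ U, χ' U ↔ P (profile N' U)) : GameIso n χ χ' := by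
  obtain ⟨σ, hσ⟩ := Equiv.Perm.exists_map_finset_eq N' N hc
  exact ⟨σ, fun U => by rw [hχ', hχ, ← hσ, profile_map_perm]⟩

abbrev GameCode := Σ _ : ℕ, (ℕ × ℕ) × (ℕ × ℕ) × Bool

def gameCodes (n : ℕ) : Finset GameCode :=
  (Ioo 0 n).sigma fun k => grid k (n - k) ×ˢ grid k (n - k) ×ˢ univ

def GameCode.game (n : ℕ) (c : GameCode) (U : Finset (Fin n)) : Prop :=
  profile {i : Fin n | (i : ℕ) < c.1} U ∈ lineCut (grid c.1 (n - c.1)) c.2.1 c.2.2.1 c.2.2.2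

theorem GameIso.setOf_eq {n : ℕ} {χ χ₀ : Finset (Fin n) → Prop} (e : GameIso n χ χ₀) :
    {χ' | GameIso n χ χ'} = {χ' | GameIso n χ₀ χ'} :=
  Set.ext fun _ => ⟨(gameIso_equivalence n).trans ((gameIso_equivalence n).symm e),
    (gameIso_equivalence n).trans e⟩

theorem exists_gameCode_gameIso {n : ℕ} {χ : Finset (Fin n) → Prop} (hχ : SimpleGame n χ)
    (hw : IsWeighted χ) (h2 : NumTypes n χ = 2) : ∃ c ∈ gameCodes n, GameIso n χ (c.game n) := by
  obtain ⟨N, hne, hnec, hN, hNc⟩ := exists_compl_classes h2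
  obtain ⟨q, w, hrep⟩ := hw
  obtain ⟨a, b, Q, hQ⟩ := hrep.exists_profile_threshold hN hNc hne hnec
  have hab : 0 < a ∨ 0 < b := by
    by_contra! h
    obtain ⟨rfl, rfl⟩ : a = 0 ∧ b = 0 := by omega
    exact hχ.2.1 ((hQ ∅).mpr (by simpa using (hQ univ).mp hχ.2.2))
  obtain ⟨p, hp, r, hr, bit, hcut⟩ := exists_lineCut_eq (grid #N (n - #N)) hab
    ⟨_, profile_mem_grid N univ, (hQ univ).mp hχ.2.2⟩
  have hNn : #N < n := by
    simpa [card_compl] using card_pos.mpr hnec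
  refine ⟨⟨#N, p, r, bit⟩, mem_sigma.mpr ⟨mem_Ioo.mpr ⟨card_pos.mpr hne, hNn⟩, by simp [hp, hr]⟩,
    gameIso_of_profile (N := N) (N' := {i : Fin n | (i : ℕ) < #N})
      (by simp [Fin.card_filter_val_lt, hNn.le]) (· ∈ lineCut (grid #N (n - #N)) p r bit)
      (fun U => ?_) fun U => Iff.rfl⟩
  rw [← hcut, mem_filter, hQ]
  exact ⟨fun h => ⟨profile_mem_grid N U, h⟩, And.right⟩

theorem wmnt_two_le_card_gameCodes (n : ℕ) : wmnt n 2 ≤ #(gameCodes n) := by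
  set classOf := fun c : GameCode => {χ' | GameIso n (c.game n) χ'}
  refine (Set.ncard_le_ncard (t := classOf '' gameCodes n) ?_
    ((gameCodes n).finite_toSet.image _)).trans ?_
  · rintro C ⟨χ, hχ, hw, h2, rfl⟩
    obtain ⟨c, hc, e⟩ := exists_gameCode_gameIso hχ hw h2
    exact ⟨c, hc, e.setOf_eq.symm⟩
  · exact (Set.ncard_image_le (gameCodes n).finite_toSet).trans (Set.ncard_coe_finset _).le

theorem card_gameCodes (n : ℕ) :
    #(gameCodes n) = 2 * ∑ k ∈ Ioo 0 n, ((k + 1) * (n - k + 1)) ^ 2 := by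
  simp only [gameCodes, card_sigma, card_product, grid, card_range, card_univ, Fintype.card_bool,
    mul_sum]
  refine sum_congr rfl fun k _ => by ring

theorem sum_range_sq_mul_sub (c : ℤ) (m : ℕ) :
    30 * ∑ k ∈ range m, (((k : ℤ) + 1) * (c - k)) ^ 2 =
      6 * m ^ 5 - 15 * m ^ 4 * c + 10 * m ^ 3 * c ^ 2 - 10 * m ^ 3 * c - 10 * m ^ 3 +
        15 * m ^ 2 * c ^ 2 + 15 * m ^ 2 * c + 5 * m * c ^ 2 + 10 * m * c + 4 * m := by
  induction m with
  | zero => simp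
  | succ m ih => rw [sum_range_succ, mul_add, ih]; push_cast; ring

theorem sum_Ioo_sq_le (n : ℕ) :
    30 * ∑ k ∈ Ioo 0 n, ((k + 1) * (n - k + 1)) ^ 2 ≤ n ^ 5 + 60 * n ^ 4 := by
  rcases Nat.eq_zero_or_pos n with rfl | hn
  · simp
  have hsplit : ∑ k ∈ range n, ((k + 1) * (n - k + 1)) ^ 2 =
      (n + 1) ^ 2 + ∑ k ∈ Ioo 0 n, ((k + 1) * (n - k + 1)) ^ 2 := by
    rw [range_eq_Ico, sum_eq_sum_Ico_succ_bot hn, Ico_add_one_left_eq_Ioo]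
    simp
  have hcast : ((∑ k ∈ range n, ((k + 1) * (n - k + 1)) ^ 2 : ℕ) : ℤ) =
      ∑ k ∈ range n, (((k : ℤ) + 1) * ((n + 1 : ℤ) - k)) ^ 2 := by
    push_cast
    refine sum_congr rfl fun k hk => ?_
    rw [Nat.cast_sub (mem_range.mp hk).le]
    ring
  have hclosed := sum_range_sq_mul_sub (n + 1) n
  rw [← hcast, hsplit] at hclosed
  generalize ∑ k ∈ Ioo 0 n, ((k + 1) * (n - k + 1)) ^ 2 = S at hclosed ⊢
  push_cast at hclosed
  have ht : (0 : ℤ) ≤ n - 1 := sub_nonneg.mpr (by exact_mod_cast hn)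
  zify
  nlinarith [pow_nonneg ht 2, pow_nonneg ht 3, pow_nonneg ht 4]

theorem stmt17_general (n : ℕ) :
    15 * wmnt n 2 ≤ n ^ 5 + 60 * n ^ 4 := by
  calc 15 * wmnt n 2 ≤ 15 * #(gameCodes n) :=
        Nat.mul_le_mul_left 15 (wmnt_two_le_card_gameCodes n)
    _ = 30 * ∑ k ∈ Ioo 0 n, ((k + 1) * (n - k + 1)) ^ 2 := by rw [card_gameCodes]; ring
    _ ≤ n ^ 5 + 60 * n ^ 4 := sum_Ioo_sq_le n

theorem stmt17 (n : ℕ) (hn : 1 ≤ n) :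
    15 * wmnt n 2 ≤ n ^ 5 + 60 * n ^ 4 :=
  stmt17_general n
end

section
/- For every t ≥ 1 and every n ≥ 2, the number wm(n, t) of isomorphism classes of weighted games on n voters with exactly t types of voters satisfies wm(n, t) < (t·n)^(t³ + 2·t²). -/
/-!
Averaging an integer representation over the automorphisms of the game, which include the
transposition of any two equivalent voters, gives weights that are constant on types. Labelling
the `t` types by `Fin t`, a coalition is then winning iff its vector of type counts lies in a
fixed halfspace of `ℝ^t`, so the game is determined up to isomorphism by its type sizes and the
trace of that halfspace on the grid `{0, …, n}^t`. By Radon's theorem halfspaces of `ℝ^t` shatter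
at most `t + 1` points, so by Sauer–Shelah there are at most `∑_{k ≤ t+1} C((n+1)^t, k)` traces;
there are at most `(n+1)^(t-1)` vectors of type sizes, and the product is below `(tn)^(t³+2t²)`.
-/

open Finset

theorem Finset.image_swap_of_mem_of_notMem {α : Type*} [DecidableEq α] {i j : α} {U : Finset α}
    (hi : i ∈ U) (hj : j ∉ U) :
    U.image (Equiv.swap i j) = insert j (U.erase i) := by
  ext x
  simp only [mem_image, mem_insert, mem_erase]
  constructor
  · rintro ⟨y, hy, rfl⟩
    rw [Equiv.swap_apply_def]
    grind
  · rintro (rfl | ⟨hxi, hx⟩)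
    · exact ⟨i, hi, Equiv.swap_apply_left i x⟩
    · exact ⟨x, hx, Equiv.swap_apply_of_ne_of_ne hxi (by grind)⟩

theorem Finset.image_swap_of_mem_iff {α : Type*} [DecidableEq α] {i j : α} {U : Finset α}
    (h : i ∈ U ↔ j ∈ U) :
    U.image (Equiv.swap i j) = U := by
  ext x
  simp only [mem_image]
  constructor
  · rintro ⟨y, hy, rfl⟩
    rw [Equiv.swap_apply_def]
    grind
  · intro hx
    refine ⟨Equiv.swap i j x, ?_, Equiv.swap_apply_self i j x⟩
    rw [Equiv.swap_apply_def]
    grind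

section Automorphisms

variable {n : ℕ} {χ : Finset (Fin n) → Prop}

lemma vequiv_refl (i : Fin n) : VEquiv χ i i :=
  ⟨fun _ hi hi' _ => absurd hi hi', fun _ hi hi' _ => absurd hi hi'⟩

lemma VEquiv.symm {i j : Fin n} (h : VEquiv χ i j) : VEquiv χ j i := ⟨h.2, h.1⟩

def IsGameAut (χ : Finset (Fin n) → Prop) (σ : Equiv.Perm (Fin n)) : Prop :=
  ∀ U, χ (U.image σ) ↔ χ U

lemma IsGameAut.mul {σ τ : Equiv.Perm (Fin n)} (hσ : IsGameAut χ σ) (hτ : IsGameAut χ τ) :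
    IsGameAut χ (σ * τ) := fun U => by
  rw [Equiv.Perm.coe_mul, ← Finset.image_image, hσ, hτ]

lemma VEquiv.swap_iff {i j : Fin n} (h : VEquiv χ i j) {U : Finset (Fin n)} (hi : i ∈ U)
    (hj : j ∉ U) : χ (insert j (U.erase i)) ↔ χ U := by
  refine ⟨fun hV => ?_, h.2 U hi hj⟩
  have hiV : i ∉ insert j (U.erase i) := by grind
  simpa [Finset.erase_insert (show j ∉ U.erase i by grind), Finset.insert_erase hi]
    using h.1 _ (mem_insert_self j _) hiV hV

lemma VEquiv.isGameAut_swap {i j : Fin n} (h : VEquiv χ i j) :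
    IsGameAut χ (Equiv.swap i j) := by
  intro U
  by_cases hij : i ∈ U ↔ j ∈ U
  · rw [image_swap_of_mem_iff hij]
  by_cases hi : i ∈ U
  · rw [image_swap_of_mem_of_notMem hi (by tauto)]
    exact h.swap_iff hi (by tauto)
  · rw [Equiv.swap_comm, image_swap_of_mem_of_notMem (by tauto) hi]
    exact h.symm.swap_iff (by tauto) hi

end Automorphisms

section Representations

variable {n : ℕ} {χ : Finset (Fin n) → Prop}

lemma IsRep.comp_perm {q : ℕ} {w : Fin n → ℕ} (hw : IsRep χ q w) {σ : Equiv.Perm (Fin n)}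
    (hσ : IsGameAut χ σ) : IsRep χ q (w ∘ σ) := fun U => by
  rw [← hσ U, hw, Finset.sum_image (fun x _ y _ h => σ.injective h)]
  rfl

lemma IsRep.sum {ι : Type*} {s : Finset ι} (hs : s.Nonempty) {q : ι → ℕ} {w : ι → Fin n → ℕ}
    (hw : ∀ a ∈ s, IsRep χ (q a) (w a)) : IsRep χ (∑ a ∈ s, q a) (fun i => ∑ a ∈ s, w a i) := by
  intro U
  rw [Finset.sum_comm]
  constructor
  · exact fun hU => Finset.sum_le_sum fun a ha => ((hw a ha) U).1 hU
  · intro hle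
    by_contra hU
    refine (Finset.sum_lt_sum_of_nonempty hs fun a ha => ?_).not_ge hle
    exact not_le.1 fun h => hU (((hw a ha) U).2 h)

lemma IsWeighted.exists_rep_preservesTypes (hχ : IsWeighted χ) :
    ∃ q w, IsRep χ q w ∧ PreservesTypes χ w := by
  classical
  obtain ⟨q, w, hw⟩ := hχ
  set G := (univ : Finset (Equiv.Perm (Fin n))).filter (IsGameAut χ)
  have hG : ∀ σ, σ ∈ G ↔ IsGameAut χ σ := by simp [G]
  refine ⟨∑ _σ ∈ G, q, fun i => ∑ σ ∈ G, w (σ i),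
    IsRep.sum ⟨1, (hG 1).2 fun U => by simp⟩ fun σ hσ => hw.comp_perm ((hG σ).1 hσ), ?_⟩
  intro i j hij
  have hswap := hij.isGameAut_swap
  refine Finset.sum_nbij' (· * Equiv.swap i j) (· * Equiv.swap i j) ?_ ?_ ?_ ?_ ?_
  · exact fun σ hσ => (hG _).2 (((hG σ).1 hσ).mul hswap)
  · exact fun σ hσ => (hG _).2 (((hG σ).1 hσ).mul hswap)
  · exact fun σ _ => Equiv.mul_swap_mul_self i j σ
  · exact fun σ _ => Equiv.mul_swap_mul_self i j σ
  · exact fun σ _ => by rw [Equiv.Perm.mul_apply, Equiv.swap_apply_right]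

end Representations

section TypeCounts

variable {n t : ℕ} {χ : Finset (Fin n) → Prop}

def typeCount (f : Fin n → Fin t) (U : Finset (Fin n)) (k : Fin t) : Fin (n + 1) :=
  ⟨#{i ∈ U | f i = k}, Nat.lt_succ_of_le ((card_le_univ _).trans_eq (Fintype.card_fin n))⟩

lemma sum_comp_eq_sum_typeCount (f : Fin n → Fin t) (a : Fin t → ℕ) (U : Finset (Fin n)) :
    ∑ i ∈ U, a (f i) = ∑ k, (typeCount f U k : ℕ) * a k := by
  rw [← Finset.sum_fiberwise U f]
  refine Finset.sum_congr rfl fun k _ => ?_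
  rw [Finset.sum_congr rfl fun i hi => congrArg a (Finset.mem_filter.1 hi).2, sum_const,
    smul_eq_mul]
  rfl

lemma sum_typeCount_univ (f : Fin n → Fin t) : ∑ k, (typeCount f univ k : ℕ) = n := by
  simpa [typeCount] using (card_eq_sum_card_fiberwise (s := univ) (t := univ) (f := f)
    fun x _ => mem_univ (f x)).symm

lemma typeCount_image (f : Fin n → Fin t) (σ : Equiv.Perm (Fin n)) (U : Finset (Fin n)) :
    typeCount f (U.image σ) = typeCount (f ∘ σ) U := by
  ext k
  simp only [typeCount, filter_image]
  exact card_image_of_injective _ σ.injective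

lemma exists_perm_comp_eq {f g : Fin n → Fin t} (h : typeCount f univ = typeCount g univ) :
    ∃ σ : Equiv.Perm (Fin n), f ∘ σ = g := by
  have hcard : ∀ k, Fintype.card {i // g i = k} = Fintype.card {i // f i = k} := fun k => by
    simp only [Fintype.card_subtype]
    exact (congrArg Fin.val (congrFun h k)).symm
  exact ⟨Equiv.ofFiberEquiv fun k => Fintype.equivOfCardEq (hcard k),
    funext (Equiv.ofFiberEquiv_map _)⟩

lemma exists_typeMap (hχ : NumTypes n χ = t) :
    ∃ f : Fin n → Fin t, Function.Surjective f ∧ ∀ i j, f i = f j → VEquiv χ i j := by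
  set types := {S : Set (Fin n) | ∃ i, S = {j | VEquiv χ i j}}
  let e : types ≃ Fin t := Finite.equivFinOfCardEq hχ
  refine ⟨fun i => e ⟨_, i, rfl⟩, fun k => ?_, fun i j hij => ?_⟩
  · obtain ⟨⟨S, i, rfl⟩, hk⟩ := e.surjective k
    exact ⟨i, hk⟩
  · have hS : {x | VEquiv χ i x} = {x | VEquiv χ j x} := congrArg Subtype.val (e.injective hij)
    have hj : j ∈ {x | VEquiv χ j x} := vequiv_refl j
    rwa [← hS] at hj

end TypeCounts

theorem Finset.Shatters.card_le_finrank_add_one {α E : Type*} [DecidableEq α] [AddCommGroup E]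
    [Module ℝ E] [FiniteDimensional ℝ E] {p : α → E} {𝒜 : Finset (Finset α)}
    (h𝒜 : ∀ A ∈ 𝒜, ∃ (φ : Module.Dual ℝ E) (c : ℝ), ∀ x, x ∈ A ↔ c ≤ φ (p x))
    {s : Finset α} (hs : 𝒜.Shatters s) : #s ≤ Module.finrank ℝ E + 1 := by
  by_contra! hlt
  have hdep : ¬ AffineIndependent ℝ (fun x : s => p x) := fun hind => by
    have h1 := hind.card_le_finrank_succ
    have h2 := Submodule.finrank_le (vectorSpan ℝ (Set.range fun x : s => p x))
    rw [Fintype.card_coe] at h1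
    omega
  obtain ⟨I, y, hyI, hyIc⟩ := Convex.radon_partition hdep
  classical
  obtain ⟨A, hA, hsA⟩ := hs (filter_subset (fun x => ∀ h : x ∈ s, (⟨x, h⟩ : s) ∈ I) s)
  obtain ⟨φ, c, hφ⟩ := h𝒜 A hA
  have hI : ∀ x : s, x ∈ I ↔ c ≤ φ (p x) := fun x => by
    have := congrArg (x.1 ∈ ·) hsA
    simp only [mem_inter, mem_filter, x.2, true_and, forall_true_left, hφ] at this
    exact this.to_iff.symm
  have hyφ : c ≤ φ y := convexHull_min (by rintro _ ⟨x, hx, rfl⟩; exact (hI x).1 hx)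
    (convex_halfSpace_ge φ.isLinear c) hyI
  have hyφ' : φ y < c := convexHull_min
    (by rintro _ ⟨x, hx, rfl⟩; exact not_le.1 fun h => hx ((hI x).2 h))
    (convex_halfSpace_lt φ.isLinear c) hyIc
  exact hyφ'.not_ge hyφ

theorem Finset.card_le_sum_choose_of_halfspaces {α E : Type*} [Fintype α] [DecidableEq α]
    [AddCommGroup E] [Module ℝ E] [FiniteDimensional ℝ E] {p : α → E} {𝒜 : Finset (Finset α)}
    (h𝒜 : ∀ A ∈ 𝒜, ∃ (φ : Module.Dual ℝ E) (c : ℝ), ∀ x, x ∈ A ↔ c ≤ φ (p x)) :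
    #𝒜 ≤ ∑ k ∈ Iic (Module.finrank ℝ E + 1), (Fintype.card α).choose k :=
  calc #𝒜 ≤ #𝒜.shatterer := card_le_card_shatterer 𝒜
    _ ≤ ∑ k ∈ Iic 𝒜.vcDim, (Fintype.card α).choose k := card_shatterer_le_sum_vcDim
    _ ≤ _ := sum_le_sum_of_subset (Iic_subset_Iic.2 (Finset.sup_le fun _ hs =>
        (mem_shatterer.1 hs).card_le_finrank_add_one h𝒜))

section Codes

variable {n t : ℕ}

def codeClass (s : Fin t → Fin (n + 1)) (W : Finset (Fin t → Fin (n + 1))) :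
    Set (Finset (Fin n) → Prop) :=
  {χ | ∃ f : Fin n → Fin t, typeCount f univ = s ∧ ∀ U, χ U ↔ typeCount f U ∈ W}

lemma setOf_gameIso_eq_codeClass {χ : Finset (Fin n) → Prop} {f : Fin n → Fin t}
    {W : Finset (Fin t → Fin (n + 1))} (hχ : ∀ U, χ U ↔ typeCount f U ∈ W) :
    {χ' | GameIso n χ χ'} = codeClass (typeCount f univ) W := by
  ext χ'
  constructor
  · rintro ⟨σ, hσ⟩
    refine ⟨f ∘ σ, ?_, fun U => by rw [hσ, hχ, typeCount_image]⟩
    rw [← typeCount_image, Finset.image_univ_equiv]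
  · rintro ⟨g, hg, hχ'⟩
    obtain ⟨σ, rfl⟩ := exists_perm_comp_eq hg.symm
    exact ⟨σ, fun U => by rw [hχ', hχ, typeCount_image]⟩

open Classical in
noncomputable def halfspaceTraces (t n : ℕ) : Finset (Finset (Fin t → Fin (n + 1))) :=
  univ.filter fun W => ∃ (φ : Module.Dual ℝ (Fin t → ℝ)) (c : ℝ),
    ∀ m, m ∈ W ↔ c ≤ φ (fun k => (m k : ℝ))

lemma exists_typeCount_mem_halfspaceTraces {χ : Finset (Fin n) → Prop} (hw : IsWeighted χ)
    (ht : NumTypes n χ = t) : ∃ (f : Fin n → Fin t) (W : Finset (Fin t → Fin (n + 1))),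
      W ∈ halfspaceTraces t n ∧ ∀ U, χ U ↔ typeCount f U ∈ W := by
  classical
  obtain ⟨f, hsurj, hf⟩ := exists_typeMap ht
  obtain ⟨q, w, hrep, hpt⟩ := hw.exists_rep_preservesTypes
  set a := w ∘ Function.surjInv hsurj
  have hwa : ∀ i, w i = a (f i) := fun i =>
    hpt i _ (hf _ _ (Function.surjInv_eq hsurj (f i)).symm)
  refine ⟨f, univ.filter fun m => q ≤ ∑ k, (m k : ℕ) * a k, ?_, fun U => ?_⟩
  · refine mem_filter.2 ⟨mem_univ _, Fintype.linearCombination ℝ fun k => (a k : ℝ), q,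
      fun m => ?_⟩
    simp only [mem_filter, mem_univ, true_and, Fintype.linearCombination_apply, smul_eq_mul]
    exact_mod_cast Iff.rfl
  · simp only [hrep U, hwa, sum_comp_eq_sum_typeCount, mem_filter, mem_univ, true_and]

end Codes

section Counting

def typeProfiles (t n : ℕ) : Finset (Fin t → Fin (n + 1)) := {s | ∑ k, (s k : ℕ) = n}

lemma card_typeProfiles_succ_le (t n : ℕ) : #(typeProfiles (t + 1) n) ≤ (n + 1) ^ t := by
  calc _ ≤ #(univ : Finset (Fin t → Fin (n + 1))) := by
        refine card_le_card_of_injOn Fin.init (fun _ _ => mem_univ _) fun s₁ hs₁ s₂ hs₂ h => ?_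
        rw [typeProfiles, mem_coe, mem_filter, Fin.sum_univ_castSucc] at hs₁ hs₂
        have hinit : ∀ k : Fin t, s₁ k.castSucc = s₂ k.castSucc := congrFun h
        have hlast : s₁ (Fin.last t) = s₂ (Fin.last t) := by
          simp only [hinit] at hs₁
          exact Fin.ext (by omega)
        exact funext (Fin.lastCases hlast hinit)
    _ = (n + 1) ^ t := by simp

lemma wmnt_le_card_mul_card (n t : ℕ) :
    wmnt n t ≤ #(typeProfiles t n) * #(halfspaceTraces t n) := by
  rw [← card_product]
  set X := typeProfiles t n ×ˢ halfspaceTraces t n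
  calc wmnt n t ≤ (Function.uncurry (codeClass (n := n) (t := t)) '' X).ncard := by
        refine Set.ncard_le_ncard ?_ (Set.toFinite _)
        rintro _ ⟨χ, -, hw, ht, rfl⟩
        obtain ⟨f, W, hW, hχ⟩ := exists_typeCount_mem_halfspaceTraces hw ht
        refine ⟨(typeCount f univ, W), ?_, (setOf_gameIso_eq_codeClass hχ).symm⟩
        exact mem_product.2 ⟨mem_filter.2 ⟨mem_univ _, sum_typeCount_univ f⟩, hW⟩
    _ ≤ #X := (Set.ncard_image_le X.finite_toSet).trans_eq (Set.ncard_coe_finset X)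

lemma card_halfspaceTraces_le (t n : ℕ) :
    #(halfspaceTraces t n) ≤ ∑ k ∈ Iic (t + 1), ((n + 1) ^ t).choose k := by
  classical
  have h := card_le_sum_choose_of_halfspaces (𝒜 := halfspaceTraces t n)
    (p := fun (m : Fin t → Fin (n + 1)) k => (m k : ℝ)) fun W hW => (mem_filter.1 hW).2
  simpa using h

end Counting

lemma sum_choose_le_mul_pow {N : ℕ} (hN : 1 ≤ N) (d : ℕ) :
    ∑ k ∈ Iic d, N.choose k ≤ (d + 1) * N ^ d := by
  calc ∑ k ∈ Iic d, N.choose k ≤ ∑ _k ∈ Iic d, N ^ d :=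
        sum_le_sum fun k hk => (N.choose_le_pow k).trans (Nat.pow_le_pow_right hN (mem_Iic.1 hk))
    _ = (d + 1) * N ^ d := by simp

lemma sum_choose_two_lt {n : ℕ} (hn : 2 ≤ n) : ∑ k ∈ Iic 2, (n + 1).choose k < n ^ 3 := by
  rw [← Nat.range_succ_eq_Iic, sum_range_succ, sum_range_succ, sum_range_one,
    Nat.choose_zero_right, Nat.choose_one_right, Nat.choose_two_right, Nat.add_sub_cancel]
  have h1 := Nat.div_mul_le_self ((n + 1) * n) 2
  have h2 : (n + 1) * n = n ^ 2 + n := by ring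
  have h3 : 2 * n ^ 2 ≤ n ^ 3 := by rw [pow_succ]; nlinarith
  have h4 : 2 * n ≤ n ^ 2 := by nlinarith
  omega

lemma pow_mul_sum_choose_lt {n : ℕ} (hn : 2 ≤ n) (t : ℕ) :
    (n + 1) ^ t * ∑ k ∈ Iic (t + 2), ((n + 1) ^ (t + 1)).choose k <
      ((t + 1) * n) ^ ((t + 1) ^ 3 + 2 * (t + 1) ^ 2) := by
  rcases t with _ | s
  · simpa using sum_choose_two_lt hn
  set T := s + 2 with hT
  have hbase : n + 1 ≤ T * n := by nlinarith
  have hfactor : s + 4 ≤ T * n := by nlinarith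
  calc (n + 1) ^ (s + 1) * ∑ k ∈ Iic (s + 3), ((n + 1) ^ T).choose k
      ≤ (n + 1) ^ (s + 1) * ((s + 4) * ((n + 1) ^ T) ^ (s + 3)) :=
        Nat.mul_le_mul_left _ (sum_choose_le_mul_pow (Nat.one_le_pow _ _ (by omega)) _)
    _ ≤ (T * n) ^ (s + 1) * (T * n * ((T * n) ^ T) ^ (s + 3)) := by
        gcongr
    _ = (T * n) ^ (T ^ 2 + 2 * T) := by
        rw [← pow_mul, ← pow_succ', ← pow_add, hT]
        ring_nf
    _ < (T * n) ^ (T ^ 3 + 2 * T ^ 2) := Nat.pow_lt_pow_right (by nlinarith) (by nlinarith)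

theorem stmt18 (n t : ℕ) (ht : 1 ≤ t) (hn : 2 ≤ n) :
    wmnt n t < (t * n) ^ (t ^ 3 + 2 * t ^ 2) := by
  obtain ⟨t, rfl⟩ : ∃ t', t = t' + 1 := ⟨t - 1, by omega⟩
  calc wmnt n (t + 1) ≤ #(typeProfiles (t + 1) n) * #(halfspaceTraces (t + 1) n) :=
        wmnt_le_card_mul_card n (t + 1)
    _ ≤ (n + 1) ^ t * ∑ k ∈ Iic (t + 2), ((n + 1) ^ (t + 1)).choose k :=
        Nat.mul_le_mul (card_typeProfiles_succ_le t n) (card_halfspaceTraces_le (t + 1) n)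
    _ < _ := pow_mul_sum_choose_lt hn t
end
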